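/- Let K ⊆ [0,1]^Γ be compact and suppose that for all real numbers p < q the family of disjoint pairs (A_α⁰, A_α¹)_{α∈Γ} does not contain an independent sequence, where A_α⁰ = {x ∈ K : x_α < p} and A_α¹ = {x ∈ K : x_α > q}. Then the family of coordinate projections {x ↦ x_α : α ∈ Γ}, viewed as a subset of the continuous functions on K, is eventually fragmented, uniformly bounded, and separates the points of K. -/

import Mathlib

/-!
Rosenthal's dichotomy, derived from the Nash-Williams (open Ramsey) theorem, says that a sequence
of pairs of sets has a subsequence which is either independent or along which no point lies in
infinitely many first and infinitely many second members. For the pairs `{x_α < p}`, `{x_α > q}`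
the hypothesis rules out the first alternative; diagonalising over rational `p < q`, every sequence
of coordinate projections has a pointwise convergent subsequence. Such a sequence of continuous
functions on a compact space is a fragmented family: by Baire's theorem on the closure of `A` it
is uniformly Cauchy from some index `N` on a relatively open piece of `A`, and shrinking that piece
around a point of `A` controls the first `N` functions as well.
-/

open Set Function

/-- A sequence of pairs of subsets `(A n, B n)` of a set `S` is *independent* if for every
`n` and every choice function `ε`, the intersection over `k < n` of `A k` (if `ε k = 0/false`)
or `B k` (if `ε k = 1/true`) is nonempty. -/
def IsIndependentSeq {S : Type*} (A B : ℕ → Set S) : Prop :=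
  ∀ (n : ℕ) (ε : Fin n → Bool),
    (⋂ k : Fin n, if ε k = true then B (k : ℕ) else A (k : ℕ)).Nonempty

/-- A family `F` of continuous real-valued functions on `X` is *fragmented* if for every
nonempty `A ⊆ X` and every `ε > 0` there is an open `O` with `O ∩ A` nonempty and
`f (O ∩ A)` of diameter smaller than `ε` for every `f ∈ F`. -/
def IsFragmentedFamily {X : Type*} [TopologicalSpace X] (F : Set C(X, ℝ)) : Prop :=
  ∀ A : Set X, A.Nonempty → ∀ ε : ℝ, ε > 0 → ∃ O : Set X, IsOpen O ∧ (O ∩ A).Nonempty ∧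
    ∀ f ∈ F, Metric.diam (f '' (O ∩ A)) < ε

/-- A family `F` is *eventually fragmented* if every sequence in `F` has a subsequence
which is a fragmented family on `X`. -/
def IsEventuallyFragmented {X : Type*} [TopologicalSpace X] (F : Set C(X, ℝ)) : Prop :=
  ∀ f : ℕ → C(X, ℝ), (∀ n, f n ∈ F) → ∃ φ : ℕ → ℕ, StrictMono φ ∧
    IsFragmentedFamily (Set.range fun k => f (φ k))

/-- The coordinate projection `x ↦ x_α` on a subset `K ⊆ [0,1]^Γ`, as a continuous
real-valued function on `K`. -/
def coordFun {Γ : Type*} (K : Set (Γ → unitInterval)) (α : Γ) : C(K, ℝ) :=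
  ⟨fun x => (x.1 α : ℝ),
    continuous_subtype_val.comp ((continuous_apply α).comp continuous_subtype_val)⟩

open Filter Topology

namespace Rosenthal

def strictUpperBounds (s : Finset ℕ) : Set ℕ := {b | ∀ a ∈ s, a < b}

lemma finite_compl_strictUpperBounds (s : Finset ℕ) : (strictUpperBounds s)ᶜ.Finite :=
  (finite_Iic (s.sup id)).subset fun b hb => by
    obtain ⟨a, ha, hba⟩ : ∃ a ∈ s, b ≤ a := by simpa [strictUpperBounds] using hb
    exact hba.trans (Finset.le_sup (f := id) ha)

lemma _root_.Set.Infinite.inter_strictUpperBounds {M : Set ℕ} (hM : M.Infinite) (s : Finset ℕ) :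
    (M ∩ strictUpperBounds s).Infinite := by
  simpa only [sdiff_compl] using hM.sdiff (finite_compl_strictUpperBounds s)

section Fusion

variable (Q : Finset ℕ → Set ℕ → Prop) {M₀ : Set ℕ}

lemma exists_infinite_subset_forall_mem
    (hQ : ∀ s M M', Q s M' → M ∩ strictUpperBounds s ⊆ M' → Q s M)
    (hdense : ∀ s, ∀ M ⊆ M₀, M.Infinite → ∃ M' ⊆ M, M'.Infinite ∧ Q s M')
    (S : Finset (Finset ℕ)) {M : Set ℕ} (hMM₀ : M ⊆ M₀)
    (hM : M.Infinite) : ∃ M' ⊆ M, M'.Infinite ∧ ∀ s ∈ S, Q s M' := by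
  classical
  induction S using Finset.induction_on with
  | empty => exact ⟨M, subset_rfl, hM, by simp⟩
  | insert s S _ ih =>
    obtain ⟨M₁, hM₁M, hM₁, hQ₁⟩ := ih
    obtain ⟨M₂, hM₂M₁, hM₂, hQ₂⟩ := hdense s M₁ (hM₁M.trans hMM₀) hM₁
    refine ⟨M₂, hM₂M₁.trans hM₁M, hM₂,
      (Finset.forall_mem_insert ..).2 ⟨hQ₂, fun t ht => ?_⟩⟩
    exact hQ t M₂ M₁ (hQ₁ t ht) (inter_subset_left.trans hM₂M₁)

theorem exists_infinite_subset_forall_finset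
    (hQ : ∀ s M M', Q s M' → M ∩ strictUpperBounds s ⊆ M' → Q s M)
    (hdense : ∀ s, ∀ M ⊆ M₀, M.Infinite → ∃ M' ⊆ M, M'.Infinite ∧ Q s M')
    (hM₀ : M₀.Infinite) :
    ∃ N ⊆ M₀, N.Infinite ∧ ∀ s : Finset ℕ, ↑s ⊆ N → Q s N := by
  obtain ⟨M₁, hM₁M₀, hM₁, hQ₁⟩ := hdense ∅ M₀ subset_rfl hM₀
  have hIoi : ∀ M : Set ℕ, M.Infinite → (M ∩ Ioi (sInf M)).Infinite := fun M hM => by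
    simpa [strictUpperBounds, Ioi] using hM.inter_strictUpperBounds {sInf M}
  -- Stage `k + 1` settles `Q` for all subsets of `[0, min (M k)]`; `N` collects the minima.
  choose! next hnext hnext_inf hQnext using fun M (hMM₀ : M ⊆ M₀) (hM : M.Infinite) =>
    exists_infinite_subset_forall_mem Q hQ hdense (Finset.range (sInf M + 1)).powerset
      (inter_subset_left.trans hMM₀) (hIoi M hM)
  let M : ℕ → Set ℕ := fun k => next^[k] M₁
  have hM : ∀ k, M k ⊆ M₀ ∧ (M k).Infinite := by
    intro k
    induction k with
    | zero => exact ⟨hM₁M₀, hM₁⟩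
    | succ k ih =>
      rw [show M (k + 1) = next (M k) from iterate_succ_apply' ..]
      exact ⟨(hnext _ ih.1 ih.2).trans (inter_subset_left.trans ih.1), hnext_inf _ ih.1 ih.2⟩
  have hM_succ : ∀ k, M (k + 1) ⊆ M k ∩ Ioi (sInf (M k)) := fun k => by
    rw [show M (k + 1) = next (M k) from iterate_succ_apply' ..]
    exact hnext _ (hM k).1 (hM k).2
  let a : ℕ → ℕ := fun k => sInf (M k)
  have ha_mem : ∀ k, a k ∈ M k := fun k => Nat.sInf_mem (hM k).2.nonempty
  have hM_anti : Antitone M :=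
    antitone_nat_of_succ_le fun k => (hM_succ k).trans inter_subset_left
  have ha : StrictMono a := strictMono_nat_of_lt_succ fun k => (hM_succ k (ha_mem (k + 1))).2
  refine ⟨range a, range_subset_iff.2 fun k => (hM k).1 (ha_mem k),
    infinite_range_of_injective ha.injective, fun s hs => ?_⟩
  obtain rfl | hne := s.eq_empty_or_nonempty
  · exact hQ ∅ _ M₁ hQ₁ fun _ ⟨⟨k, hk⟩, _⟩ => hk ▸ hM_anti k.zero_le (ha_mem k)
  obtain ⟨j, hj⟩ := hs (s.max'_mem hne)
  refine hQ s _ (M (j + 1)) ?_ ?_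
  · rw [show M (j + 1) = next (M j) from iterate_succ_apply' ..]
    exact hQnext _ (hM j).1 (hM j).2 s <| Finset.mem_powerset.2 fun b hb =>
      Finset.mem_range_succ_iff.2 (hj ▸ s.le_max' b hb :)
  · rintro _ ⟨⟨k, rfl⟩, hk⟩
    exact hM_anti (ha.lt_iff_lt.1 (hj ▸ hk _ (s.max'_mem hne))) (ha_mem k)

end Fusion

theorem exists_infinite_subset_forall {ι : Type*} [Countable ι] (Q : ι → Set ℕ → Prop)
    (hQ : ∀ i M M', Q i M' → (M \ M').Finite → Q i M) {M₀ : Set ℕ} (hM₀ : M₀.Infinite)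
    (hdense : ∀ i, ∀ M ⊆ M₀, M.Infinite → ∃ M' ⊆ M, M'.Infinite ∧ Q i M') :
    ∃ N ⊆ M₀, N.Infinite ∧ ∀ i, Q i N := by
  cases isEmpty_or_nonempty ι
  · exact ⟨M₀, subset_rfl, hM₀, isEmptyElim⟩
  obtain ⟨e, he⟩ := exists_surjective_nat ι
  -- an infinite `N` has finite subsets of every cardinality
  obtain ⟨N, hNM₀, hN, hQN⟩ :=
    exists_infinite_subset_forall_finset (fun s M => Q (e s.card) M)
      (fun s M M' h hM => hQ _ M M' h <| (finite_compl_strictUpperBounds s).subset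
        fun b hb hbs => hb.2 (hM ⟨hb.1, hbs⟩)) (fun s => hdense (e s.card)) hM₀
  refine ⟨N, hNM₀, hN, fun i => ?_⟩
  obtain ⟨k, rfl⟩ := he i
  obtain ⟨s, hsN, rfl⟩ := hN.exists_subset_card_eq k
  exact hQN s hsN

section NashWilliams

def IsInitialSegment (s : Finset ℕ) (P : Set ℕ) : Prop :=
  ↑s ⊆ P ∧ ∀ a ∈ s, ∀ b ∈ P, b ≤ a → b ∈ s

variable (F : Set (Finset ℕ))

-- The accept/reject relations of Galvin and Prikry's combinatorial forcing.
def Accepts (M : Set ℕ) (s : Finset ℕ) : Prop :=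
  ∀ P ⊆ M ∩ strictUpperBounds s, P.Infinite → ∃ t ∈ F, IsInitialSegment t (↑s ∪ P)

def Rejects (M : Set ℕ) (s : Finset ℕ) : Prop :=
  ∀ M' ⊆ M, M'.Infinite → ¬ Accepts F M' s

variable {F}

lemma Accepts.of_inter_subset {M M' : Set ℕ} {s : Finset ℕ} (h : Accepts F M' s)
    (hM : M ∩ strictUpperBounds s ⊆ M') : Accepts F M s :=
  fun P hP => h P (subset_inter (hP.trans hM) (hP.trans inter_subset_right))

lemma Rejects.of_inter_subset {M M' : Set ℕ} {s : Finset ℕ} (h : Rejects F M' s)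
    (hM : M ∩ strictUpperBounds s ⊆ M') : Rejects F M s := fun _ hM₁ hM₁i hacc =>
  h _ ((inter_subset_inter_left _ hM₁).trans hM) (hM₁i.inter_strictUpperBounds s)
    (hacc.of_inter_subset (inter_subset_left.trans inter_subset_left))

lemma accepts_of_mem {M : Set ℕ} {s : Finset ℕ} (hs : s ∈ F) : Accepts F M s :=
  fun _ hP _ => ⟨s, hs, subset_union_left, fun a ha _ hb hba =>
    hb.resolve_right fun hbP => (hP hbP).2 a ha |>.not_ge hba⟩

lemma exists_accepts_or_rejects (s : Finset ℕ) {M : Set ℕ} (hM : M.Infinite) :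
    ∃ M' ⊆ M, M'.Infinite ∧ (Accepts F M' s ∨ Rejects F M' s) := by
  by_cases h : Rejects F M s
  · exact ⟨M, subset_rfl, hM, Or.inr h⟩
  · simp only [Rejects, not_forall, not_not] at h
    obtain ⟨M', hM', hM'i, hacc⟩ := h
    exact ⟨M', hM', hM'i, Or.inl hacc⟩

lemma Rejects.finite_accepts_insert {N : Set ℕ} {s : Finset ℕ} (h : Rejects F N s) :
    {n ∈ N ∩ strictUpperBounds s | Accepts F N (insert n s)}.Finite := by
  -- otherwise this set accepts `s`: extend `s` by the least element of `P` first
  by_contra hinf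
  refine h _ (fun n hn => hn.1.1) hinf fun P hP hPi => ?_
  have hn : sInf P ∈ P := Nat.sInf_mem hPi.nonempty
  have hP' : P \ {sInf P} ⊆ N ∩ strictUpperBounds (insert (sInf P) s) := fun b hb =>
    ⟨(hP hb.1).1.1.1, Finset.forall_mem_insert .. |>.2
      ⟨(Nat.sInf_le hb.1).lt_of_ne (Ne.symm hb.2), (hP hb.1).2⟩⟩
  obtain ⟨t, htF, ht⟩ := (hP hn).1.2 _ hP' (hPi.sdiff (finite_singleton _))
  refine ⟨t, htF, ?_⟩
  convert ht using 1
  ext b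
  by_cases hb : b = sInf P <;> simp [hb, hn]

lemma exists_infinite_subset_rejects_insert {N : Set ℕ}
    (hN : ∀ s : Finset ℕ, ↑s ⊆ N → Accepts F N s ∨ Rejects F N s) {s : Finset ℕ}
    (hsN : ↑s ⊆ N) (hs : Rejects F N s) {M : Set ℕ} (hMN : M ⊆ N) (hM : M.Infinite) :
    ∃ M' ⊆ M, M'.Infinite ∧
      ∀ n ∈ M' ∩ strictUpperBounds s, Rejects F N (insert n s) := by
  refine ⟨M \ {n ∈ N ∩ strictUpperBounds s | Accepts F N (insert n s)}, sdiff_subset,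
    hM.sdiff hs.finite_accepts_insert, fun n ⟨⟨hnM, hnacc⟩, hns⟩ => ?_⟩
  refine (hN _ ?_).resolve_left fun hacc => hnacc ⟨⟨hMN hnM, hns⟩, hacc⟩
  simpa [insert_subset_iff] using ⟨hMN hnM, hsN⟩

variable (F) in
theorem nashWilliams {M : Set ℕ} (hM : M.Infinite) :
    ∃ N ⊆ M, N.Infinite ∧
      ((∀ P ⊆ N, P.Infinite → ∃ s ∈ F, IsInitialSegment s P) ∨
        ∀ s : Finset ℕ, ↑s ⊆ N → s ∉ F) := by
  obtain ⟨N₁, hN₁M, hN₁, hdec⟩ := exists_infinite_subset_forall_finset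
    (fun s M => Accepts F M s ∨ Rejects F M s)
    (fun s _ _ h hM => h.imp (·.of_inter_subset hM) (·.of_inter_subset hM)) (M₀ := M)
    (fun s M _ hM => exists_accepts_or_rejects s hM) hM
  obtain hacc | hrej := hdec ∅ (by simp)
  · exact ⟨N₁, hN₁M, hN₁, Or.inl fun P hP hPi => by
      simpa using hacc P (by simpa [strictUpperBounds] using hP) hPi⟩
  -- `N₁` rejects `∅`; thin it out so that rejection passes to one-point extensions
  obtain ⟨N₂, hN₂N₁, hN₂, hext⟩ := exists_infinite_subset_forall_finset
    (fun s M => ↑s ⊆ N₁ → Rejects F N₁ s →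
      ∀ n ∈ M ∩ strictUpperBounds s, Rejects F N₁ (insert n s))
    (fun s _ _ h hM hsN hs n hn => h hsN hs n ⟨hM hn, hn.2⟩)
    (fun s M hMN hM => by
      by_cases hs : ↑s ⊆ N₁ ∧ Rejects F N₁ s
      · obtain ⟨M', hM'M, hM', h⟩ :=
          exists_infinite_subset_rejects_insert hdec hs.1 hs.2 hMN hM
        exact ⟨M', hM'M, hM', fun _ _ => h⟩
      · exact ⟨M, subset_rfl, hM, fun hsN hrej => absurd ⟨hsN, hrej⟩ hs⟩) hN₁
  have hrej' : ∀ s : Finset ℕ, ↑s ⊆ N₂ → Rejects F N₁ s := by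
    intro s
    induction s using Finset.induction_on_max with
    | empty => exact fun _ => hrej
    | insert n s hlt ih =>
      intro hs
      rw [Finset.coe_insert, insert_subset_iff] at hs
      exact hext s hs.2 (hs.2.trans hN₂N₁) (ih hs.2) n ⟨hs.1, hlt⟩
  exact ⟨N₂, hN₂N₁.trans hN₁M, hN₂, Or.inr fun s hs hsF =>
    hrej' s hs N₁ subset_rfl hN₁ (accepts_of_mem hsF)⟩

end NashWilliams

section Dichotomy

variable {X : Type*} (C D : ℕ → Set X)

/-- The `i`-th element of `P` contributes `C` for even `i` and `D` for odd `i`. -/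
def alternatingInter (P : Set ℕ) : Set X :=
  ⋂ a ∈ P, if Even (P ∩ Iio a).ncard then C a else D a

variable {C D}

lemma alternatingInter_subset_of_isInitialSegment {s : Finset ℕ} {P : Set ℕ}
    (h : IsInitialSegment s P) : alternatingInter C D P ⊆ alternatingInter C D ↑s := by
  intro x hx
  simp only [alternatingInter, mem_iInter] at hx ⊢
  intro a ha
  have : ↑s ∩ Iio a = P ∩ Iio a :=
    Subset.antisymm (inter_subset_inter_left _ h.1) fun b hb => ⟨h.2 a ha b hb.1 hb.2.le, hb.2⟩
  exact this ▸ hx a (h.1 ha)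

lemma mem_alternatingInter_image {q : ℕ → ℕ} (hq : StrictMono q) {I : Set ℕ}
    (hI : ∀ j ∈ I, ∀ i < j, i ∈ I) {x : X} :
    x ∈ alternatingInter C D (q '' I) ↔
      ∀ j ∈ I, x ∈ if Even j then C (q j) else D (q j) := by
  have hcard : ∀ j ∈ I, (q '' I ∩ Iio (q j)).ncard = j := fun j hj => by
    have : q '' I ∩ Iio (q j) = q '' Iio j := by
      ext b
      simp only [mem_inter_iff, mem_image, mem_Iio]
      constructor
      · rintro ⟨⟨i, -, rfl⟩, hi⟩
        exact ⟨i, hq.lt_iff_lt.1 hi, rfl⟩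
      · rintro ⟨i, hi, rfl⟩
        exact ⟨⟨i, hI j hj i hi, rfl⟩, hq hi⟩
    rw [this, ncard_image_of_injective _ hq.injective, ncard_Iio_nat]
  simp only [alternatingInter, mem_iInter, forall_mem_image]
  exact forall₂_congr fun j hj => by rw [hcard j hj, apply_ite (x ∈ ·)]

lemma exists_infinite_subset_mem_alternatingInter {N : Set ℕ} {x : X}
    (hC : {n ∈ N | x ∈ C n}.Infinite) (hD : {n ∈ N | x ∈ D n}.Infinite) :
    ∃ P ⊆ N, P.Infinite ∧ x ∈ alternatingInter C D P := by
  obtain ⟨q, hq, hqN⟩ := extraction_forall_of_frequently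
    (P := fun j n => n ∈ N ∧ x ∈ if Even j then C n else D n) fun j => by
      rw [Nat.frequently_atTop_iff_infinite]
      by_cases hj : Even j <;> simpa [hj]
  refine ⟨range q, range_subset_iff.2 fun j => (hqN j).1,
    infinite_range_of_injective hq.injective, ?_⟩
  rw [← image_univ, mem_alternatingInter_image hq (fun _ _ _ _ => mem_univ _)]
  exact fun j _ => (hqN j).2

lemma strictMono_three_mul_div_two_add {c : ℕ → ℕ} (hc : ∀ k, c k ≤ 1) :
    StrictMono fun j => 3 * (j / 2) + j % 2 + c (j / 2) := by
  refine strictMono_nat_of_lt_succ fun j => ?_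
  obtain ⟨k, rfl | rfl⟩ := Nat.even_or_odd' j
  · simp only [show (2 * k + 1) / 2 = k by omega, Nat.mul_div_cancel_left k two_pos]
    omega
  · simp only [show (2 * k + 1) / 2 = k by omega, show (2 * k + 1 + 1) / 2 = k + 1 by omega]
    have := hc k
    have := hc (k + 1)
    omega

/-- Every pattern `ε` is realised by the terms `3k+1`: each takes either the odd slot of the pair
`(3k, 3k+1)` or the even slot of the pair `(3k+1, 3k+2)` of an alternating word. -/
lemma isIndependentSeq_of_forall_alternating
    (h : ∀ q : ℕ → ℕ, StrictMono q → ∀ m,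
      ∃ x, ∀ j < m, x ∈ if Even j then C (q j) else D (q j)) :
    IsIndependentSeq (fun k => C (3 * k + 1)) (fun k => D (3 * k + 1)) := by
  intro n ε
  let c : ℕ → ℕ := fun k => if hk : k < n then (!ε ⟨k, hk⟩).toNat else 0
  obtain ⟨x, hx⟩ := h _ (strictMono_three_mul_div_two_add (c := c) fun k => by
    unfold c; split <;> simp [Bool.toNat_le]) (2 * n)
  refine ⟨x, mem_iInter.2 fun k => ?_⟩
  have hck : c k = (!ε k).toNat := dif_pos k.2
  cases hε : ε k
  · simpa [hck, hε, Nat.mul_div_cancel_left _ two_pos] using hx (2 * k) (by omega)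
  · simpa [hck, hε, show (2 * (k : ℕ) + 1) / 2 = k by omega, Nat.even_add_one]
      using hx (2 * k + 1) (by omega)

variable (C D) in
theorem exists_isIndependentSeq_or_exists_infinite {M : Set ℕ} (hM : M.Infinite) :
    (∃ ψ : ℕ → ℕ, StrictMono ψ ∧ (∀ k, ψ k ∈ M) ∧
        IsIndependentSeq (fun k => C (ψ k)) (fun k => D (ψ k))) ∨
      ∃ N ⊆ M, N.Infinite ∧
        ∀ x, ¬ ({n ∈ N | x ∈ C n}.Infinite ∧ {n ∈ N | x ∈ D n}.Infinite) := by
  obtain ⟨N, hNM, hN, hF | hF⟩ := nashWilliams {s | alternatingInter C D ↑s = ∅} hM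
  · refine Or.inr ⟨N, hNM, hN, fun x ⟨hC, hD⟩ => ?_⟩
    obtain ⟨P, hPN, hP, hxP⟩ := exists_infinite_subset_mem_alternatingInter hC hD
    obtain ⟨s, hs, hsP⟩ := hF P hPN hP
    exact (hs ▸ alternatingInter_subset_of_isInitialSegment hsP hxP : x ∈ (∅ : Set X))
  · let φ := Nat.nth (· ∈ N)
    have hφ : StrictMono φ := Nat.nth_strictMono hN
    have hφN : ∀ k, φ k ∈ N := Nat.nth_mem_of_infinite hN
    refine Or.inl ⟨fun k => φ (3 * k + 1), hφ.comp fun a b h => by omega, fun k => hNM (hφN _),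
      isIndependentSeq_of_forall_alternating (C := C ∘ φ) (D := D ∘ φ) fun q hq m => ?_⟩
    have hne := hF ((Finset.range m).image (φ ∘ q))
      (by simpa [subset_def] using fun j _ => hφN (q j))
    rw [mem_ofPred_eq, ← ne_eq, ← nonempty_iff_ne_empty, Finset.coe_image, Finset.coe_range]
      at hne
    obtain ⟨x, hx⟩ := hne
    exact ⟨x, (mem_alternatingInter_image (hφ.comp hq) fun j hj i hij => hij.trans hj).1 hx⟩

end Dichotomy

theorem exists_infinite_forall_not_infinite_lt_and_infinite_gt {X : Type*} (f : ℕ → X → ℝ)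
    (h : ∀ p q : ℝ, p < q → ∀ ψ : ℕ → ℕ, StrictMono ψ →
      ¬ IsIndependentSeq (fun k => {x | f (ψ k) x < p}) (fun k => {x | q < f (ψ k) x})) :
    ∃ N : Set ℕ, N.Infinite ∧ ∀ p q : ℚ, p < q → ∀ x,
      ¬ ({n ∈ N | f n x < p}.Infinite ∧ {n ∈ N | q < f n x}.Infinite) := by
  have hfin : ∀ {M M' : Set ℕ} {P : ℕ → Prop}, (M \ M').Finite →
      {n ∈ M | P n}.Infinite → {n ∈ M' | P n}.Infinite := fun hMM' hM =>
    (hM.sdiff hMM').mono fun _ hn => ⟨not_not.1 fun h => hn.2 ⟨hn.1.1, h⟩, hn.1.2⟩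
  obtain ⟨N, -, hN, hQ⟩ := exists_infinite_subset_forall
    (fun (pq : ℚ × ℚ) N => pq.1 < pq.2 → ∀ x,
      ¬ ({n ∈ N | f n x < pq.1}.Infinite ∧ {n ∈ N | pq.2 < f n x}.Infinite))
    (fun _ _ _ h hMM' hpq x hx => h hpq x ⟨hfin hMM' hx.1, hfin hMM' hx.2⟩) infinite_univ
    fun pq M _ hM => by
      by_cases hpq : pq.1 < pq.2
      · obtain ⟨ψ, hψ, -, hind⟩ | ⟨N, hNM, hN, hNQ⟩ :=
          exists_isIndependentSeq_or_exists_infinite (fun n => {x | f n x < pq.1})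
            (fun n => {x | pq.2 < f n x}) hM
        · exact absurd hind (h _ _ (Rat.cast_lt.2 hpq) ψ hψ)
        · exact ⟨N, hNM, hN, fun _ => hNQ⟩
      · exact ⟨M, subset_rfl, hM, fun h => absurd h hpq⟩
  exact ⟨N, hN, fun p q hpq => hQ (p, q) hpq⟩

theorem exists_strictMono_tendsto_of_not_isIndependentSeq {X : Type*} (f : ℕ → X → ℝ)
    (hf : ∀ x, ∃ C, ∀ n, |f n x| ≤ C)
    (h : ∀ p q : ℝ, p < q → ∀ ψ : ℕ → ℕ, StrictMono ψ →
      ¬ IsIndependentSeq (fun k => {x | f (ψ k) x < p}) (fun k => {x | q < f (ψ k) x})) :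
    ∃ φ : ℕ → ℕ, StrictMono φ ∧
      ∀ x, ∃ l, Tendsto (fun k => f (φ k) x) atTop (𝓝 l) := by
  obtain ⟨N, hN, hNQ⟩ := exists_infinite_forall_not_infinite_lt_and_infinite_gt f h
  let φ := Nat.nth (· ∈ N)
  have hφ : StrictMono φ := Nat.nth_strictMono hN
  have hfreq : ∀ {P : ℕ → Prop}, (∃ᶠ k in atTop, P (φ k)) → {n ∈ N | P n}.Infinite :=
    fun hP => Nat.frequently_atTop_iff_infinite.1 <| hφ.tendsto_atTop.frequently <|
      hP.mono fun k hk => ⟨Nat.nth_mem_of_infinite hN k, hk⟩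
  refine ⟨φ, hφ, fun x => ?_⟩
  obtain ⟨C, hC⟩ := hf x
  refine tendsto_of_no_upcrossings Rat.denseRange_cast ?_
    (isBoundedUnder_of ⟨C, fun k => (abs_le.1 (hC _)).2⟩)
    (isBoundedUnder_of ⟨-C, fun k => (abs_le.1 (hC _)).1⟩)
  rintro _ ⟨p, rfl⟩ _ ⟨q, rfl⟩ hpq ⟨hp, hq⟩
  exact hNQ p q (Rat.cast_lt.1 hpq) x ⟨hfreq hp, hfreq hq⟩

section Fragmented

variable {X : Type*} [TopologicalSpace X] [CompactSpace X] [T2Space X]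

theorem exists_isOpen_inter_nonempty_forall_dist_le (g : ℕ → C(X, ℝ))
    (hg : ∀ x, CauchySeq fun n => g n x) {A : Set X} (hA : A.Nonempty) {δ : ℝ} (hδ : 0 < δ) :
    ∃ N V, IsOpen V ∧ (V ∩ A).Nonempty ∧
      ∀ z ∈ V ∩ A, ∀ m ≥ N, ∀ n ≥ N, dist (g m z) (g n z) ≤ δ := by
  have : CompactSpace (closure A) := isCompact_iff_compactSpace.1 isClosed_closure.isCompact
  have : Nonempty (closure A) := hA.closure.to_subtype
  let T : ℕ → Set (closure A) := fun N =>
    {y | ∀ m ≥ N, ∀ n ≥ N, dist (g m y) (g n y) ≤ δ}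
  have hT : ∀ N, IsClosed (T N) := fun N => by
    simp only [T, ofPred_forall]
    exact isClosed_biInter fun m _ => isClosed_biInter fun n _ =>
      isClosed_le (by fun_prop) continuous_const
  have hTcover : ⋃ N, T N = univ := eq_univ_of_forall fun y => by
    obtain ⟨N, hN⟩ := Metric.cauchySeq_iff.1 (hg y) δ hδ
    exact mem_iUnion.2 ⟨N, fun m hm n hn => (hN m hm n hn).le⟩
  obtain ⟨N, y, hy⟩ := nonempty_interior_of_iUnion_of_closed hT hTcover
  obtain ⟨V, hV, hVT⟩ := isOpen_induced_iff.1 (isOpen_interior (s := T N))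
  refine ⟨N, V, hV, mem_closure_iff.1 y.2 V hV (hVT ▸ hy : y ∈ Subtype.val ⁻¹' V),
    fun z hz => ?_⟩
  have : (⟨z, subset_closure hz.2⟩ : closure A) ∈ interior (T N) := by
    rw [← hVT]
    exact hz.1
  exact interior_subset this

theorem isFragmentedFamily_range_of_cauchySeq (g : ℕ → C(X, ℝ))
    (hg : ∀ x, CauchySeq fun n => g n x) : IsFragmentedFamily (range g) := by
  intro A hA ε hε
  obtain ⟨δ, hδ, hδε⟩ : ∃ δ, 0 < δ ∧ 4 * δ < ε :=
    ⟨ε / 5, by positivity, by linarith⟩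
  obtain ⟨N, V, hV, ⟨y, hyV, hyA⟩, hVA⟩ :=
    exists_isOpen_inter_nonempty_forall_dist_le g hg hA hδ
  let W := V ∩ ⋂ k ∈ Finset.range (N + 1), {z | dist (g k z) (g k y) < δ}
  have hW : IsOpen W :=
    hV.inter <| isOpen_biInter_finset fun k _ => isOpen_lt (by fun_prop) continuous_const
  have hWy : ∀ z ∈ W, ∀ k ≤ N, dist (g k z) (g k y) < δ := fun z hz k hk =>
    mem_iInter₂.1 hz.2 k (Finset.mem_range_succ_iff.2 hk)
  refine ⟨W, hW, ⟨y, ⟨hyV, mem_iInter₂.2 fun k _ => by simpa using hδ⟩, hyA⟩, ?_⟩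
  rintro _ ⟨k, rfl⟩
  refine (Metric.diam_le_of_forall_dist_le (by positivity) ?_).trans_lt hδε
  rintro _ ⟨z, hz, rfl⟩ _ ⟨w, hw, rfl⟩
  rcases le_or_gt k N with hk | hk
  · linarith [hδ, dist_triangle_right (g k z) (g k w) (g k y), hWy z hz.1 k hk, hWy w hw.1 k hk]
  · -- on `V ∩ A` the function `g k` is `δ`-close to `g N`, which oscillates by `< 2δ` on `W`
    linarith [dist_triangle4 (g k z) (g N z) (g N w) (g k w),
      dist_triangle_right (g N z) (g N w) (g N y), hWy z hz.1 N le_rfl, hWy w hw.1 N le_rfl,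
      hVA z ⟨hz.1.1, hz.2⟩ k hk.le N le_rfl, hVA w ⟨hw.1.1, hw.2⟩ N le_rfl k hk.le]

end Fragmented

end Rosenthal

open Rosenthal in
/-- If `K ⊆ [0,1]^Γ` is compact and for all reals `p < q` the family of disjoint pairs
`({x | x_α < p}, {x | x_α > q})`, `α ∈ Γ`, contains no independent sequence, then the family
of coordinate projections is eventually fragmented, uniformly bounded and separates the
points of `K`. -/
theorem coordinate_projections_eventuallyFragmented
    {Γ : Type*} (K : Set (Γ → unitInterval)) (hcomp : IsCompact K)
    (h : ∀ p q : ℝ, p < q →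
      ¬ ∃ φ : ℕ → Γ, IsIndependentSeq
          (fun n => {x : K | (x.1 (φ n) : ℝ) < p})
          (fun n => {x : K | (x.1 (φ n) : ℝ) > q})) :
    IsEventuallyFragmented (Set.range (coordFun K)) ∧
      (∃ M : ℝ, ∀ f ∈ Set.range (coordFun K), ∀ x : K, |f x| ≤ M) ∧
      (∀ x y : K, x ≠ y → ∃ f ∈ Set.range (coordFun K), f x ≠ f y) := by
  have hbound : ∀ α (x : K), |coordFun K α x| ≤ 1 := fun α x =>
    abs_le.2 ⟨(neg_one_lt_zero.trans_le (x.1 α).2.1).le, (x.1 α).2.2⟩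
  refine ⟨fun f hf => ?_, ⟨1, forall_mem_range.2 hbound⟩, fun x y hxy => ?_⟩
  · choose α hα using hf
    obtain rfl : f = fun n => coordFun K (α n) := funext fun n => (hα n).symm
    obtain ⟨φ, hφ, hlim⟩ := exists_strictMono_tendsto_of_not_isIndependentSeq
      (fun n x => coordFun K (α n) x) (fun x => ⟨1, fun n => hbound _ x⟩)
      fun p q hpq ψ _ hind => h p q hpq ⟨α ∘ ψ, hind⟩
    have := isCompact_iff_compactSpace.1 hcomp
    exact ⟨φ, hφ,
      isFragmentedFamily_range_of_cauchySeq _ fun x => (hlim x).choose_spec.cauchySeq⟩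
  · obtain ⟨α, hα⟩ := Function.ne_iff.1 fun hxy' => hxy (Subtype.ext hxy')
    exact ⟨coordFun K α, mem_range_self α, fun h => hα (Subtype.ext h)⟩
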